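/- (Box uncertainty polytope.) Let Δ be a box uncertainty set with greatest element d̂, and define x̲_j = L_{G(p+d̂)}(s,j) (earliest schedule under p+d̂) and x̄_j = M − L⁰(j,t) (latest start under p and deadline M). Let H* = { j ∈ J : x̲_j ≤ x̄_j }. Then the convex hull of incidence vectors of anchored sets equals the box [0,1]^{H*} × {0}^{J∖H*}; in particular a set H ⊆ J is anchored if and only if H ⊆ H*. -/

import Mathlib

/-!
Taking the worst case `δ = dhat`, an anchored schedule `x` agrees on `H` with a schedule of
`G(p + dhat)`, so `xlo j ≤ x j ≤ x t - L0t j ≤ M - L0t j` on `H`: anchored sets lie in `H*`.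
Conversely `xlo` is a schedule of `G(p + δ)` for every `δ ≤ dhat`, and `min xlo (M - L0t)` is a
schedule of `G(p)` meeting the deadline which coincides with `xlo` on `H*`, so every subset of
`H*` is anchored. The anchored incidence vectors are therefore exactly `{0,1}^{H*} × {0}`,
whose convex hull is the box.
-/

/-- Length of a path (given as a list of vertices) when each arc `(i,j)` has
length `q i` (the duration of its source vertex). -/
def PathLen {V : Type*} (q : V → ℝ) (l : List V) : ℝ := (l.dropLast.map q).sum

/-- `l` is a path from `i` to `j` in the digraph with arc relation `A`. -/
def IsPath {V : Type*} (A : V → V → Prop) (i j : V) (l : List V) : Prop :=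
  l ≠ [] ∧ l.Chain' A ∧ l.head? = some i ∧ l.getLast? = some j

/-- Length of a path for arc-indexed weights `w`. -/
def LenW {V : Type*} (w : V → V → ℝ) : List V → ℝ
  | a :: b :: l => w a b + LenW w (b :: l)
  | _ => 0

/-- `x` is a schedule of the precedence graph `(V, A)` with durations `q` and source `s`. -/
def Sched {V : Type*} (A : V → V → Prop) (s : V) (q x : V → ℝ) : Prop :=
  x s = 0 ∧ (∀ v, 0 ≤ x v) ∧ ∀ i j, A i j → q i ≤ x j - x i

/-- `H` is `x`-anchored for the uncertainty set `Δ`. -/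
def XAnchored {V : Type*} (A : V → V → Prop) (s : V) (p : V → ℝ)
    (Δ : Set (V → ℝ)) (x : V → ℝ) (H : Set V) : Prop :=
  ∀ δ ∈ Δ, ∃ y, Sched A s (fun v => p v + δ v) y ∧ ∀ i ∈ H, y i = x i

/-- `L` is the longest `i`–`j` path length under durations `q`. -/
def IsLongest {V : Type*} (A : V → V → Prop) (q : V → ℝ) (i j : V) (L : ℝ) : Prop :=
  IsGreatest {r | ∃ l, IsPath A i j l ∧ PathLen q l = r} L

/-- `L` is the worst-case longest `i`–`j` path length over the uncertainty set `Δ`. -/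
def IsWorst {V : Type*} (A : V → V → Prop) (p : V → ℝ) (Δ : Set (V → ℝ))
    (i j : V) (L : ℝ) : Prop :=
  IsGreatest {r | ∃ δ ∈ Δ, ∃ l, IsPath A i j l ∧ PathLen (fun v => p v + δ v) l = r} L

section Paths

variable {V : Type*} {A : V → V → Prop}

lemma pathLen_cons (q : V → ℝ) (a : V) {l : List V} (hl : l ≠ []) :
    PathLen q (a :: l) = q a + PathLen q l := by
  simp [PathLen, List.dropLast_cons_of_ne_nil hl]

lemma pathLen_concat (q : V → ℝ) {l : List V} {j : V} (hl : l.getLast? = some j) (k : V) :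
    PathLen q (l ++ [k]) = PathLen q l + q j := by
  rw [← List.dropLast_append_getLast? j hl]
  simp [PathLen]

lemma pathLen_nonneg {q : V → ℝ} (hq : ∀ v, 0 ≤ q v) (l : List V) : 0 ≤ PathLen q l :=
  List.sum_nonneg fun _ hr => by
    obtain ⟨v, -, rfl⟩ := List.mem_map.1 hr
    exact hq v

lemma IsPath.cons {a i j : V} {l : List V} (hA : A a i) (h : IsPath A i j l) :
    IsPath A a j (a :: l) := by
  obtain ⟨hne, hch, hh, hl⟩ := h
  obtain ⟨c, r, rfl⟩ := List.exists_cons_of_ne_nil hne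
  obtain rfl : c = i := by simpa using hh
  exact ⟨List.cons_ne_nil _ _, List.isChain_cons_cons.mpr ⟨hA, hch⟩, rfl, by simpa using hl⟩

lemma IsPath.concat {i j k : V} {l : List V} (h : IsPath A i j l) (hA : A j k) :
    IsPath A i k (l ++ [k]) := by
  obtain ⟨hne, hch, hh, hl⟩ := h
  refine ⟨by simp, List.isChain_append.mpr ⟨hch, List.isChain_singleton k, ?_⟩, ?_, by simp⟩
  · intro x hx y hy
    simp_all
  · obtain ⟨c, r, rfl⟩ := List.exists_cons_of_ne_nil hne
    simpa using hh

lemma IsPath.add_pathLen_le {q x : V → ℝ} (hx : ∀ i j, A i j → q i ≤ x j - x i) :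
    ∀ {l : List V} {i j : V}, IsPath A i j l → x i + PathLen q l ≤ x j
  | [], _, _, h => absurd rfl h.1
  | [a], i, j, ⟨_, _, hh, hl⟩ => by
    obtain rfl : a = i := by simpa using hh
    obtain rfl : a = j := by simpa using hl
    simp [PathLen]
  | a :: b :: l, i, j, ⟨_, hch, hh, hl⟩ => by
    obtain rfl : a = i := by simpa using hh
    rw [List.Chain', List.isChain_cons_cons] at hch
    have hrest := IsPath.add_pathLen_le hx ⟨List.cons_ne_nil _ _, hch.2, rfl, by simpa using hl⟩
    rw [pathLen_cons q a (List.cons_ne_nil b l)]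
    linarith [hx _ _ hch.1]

lemma IsPath.pathLen_eq_zero (hacyc : ∀ v, ¬ Relation.TransGen A v v) (q : V → ℝ) {v : V}
    {l : List V} (h : IsPath A v v l) : PathLen q l = 0 := by
  obtain ⟨hne, hch, hh, hl⟩ := h
  rcases l with _ | ⟨a, _ | ⟨b, r⟩⟩
  · exact absurd rfl hne
  · simp [PathLen]
  · obtain rfl : a = v := by simpa using hh
    rw [List.Chain', List.isChain_cons_cons] at hch
    have hba : Relation.ReflTransGen A b a := List.relationReflTransGen_of_exists_isChain_cons r
      hch.2 ((List.getLast_eq_iff_getLast?_eq_some _).2 (by simpa using hl))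
    exact absurd (Relation.TransGen.head' hch.1 hba) (hacyc a)

end Paths

section Longest

variable {V : Type*} {A : V → V → Prop} {q : V → ℝ}

lemma IsLongest.nonneg (hq : ∀ v, 0 ≤ q v) {i j : V} {L : ℝ} (h : IsLongest A q i j L) :
    0 ≤ L := by
  obtain ⟨l, -, rfl⟩ := h.1
  exact pathLen_nonneg hq l

lemma IsLongest.eq_zero (hacyc : ∀ v, ¬ Relation.TransGen A v v) {v : V} {L : ℝ}
    (h : IsLongest A q v v L) : L = 0 := by
  obtain ⟨l, hl, rfl⟩ := h.1
  exact hl.pathLen_eq_zero hacyc q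

lemma IsLongest.add_le_of_arc_end {i j k : V} {a b : ℝ} (ha : IsLongest A q i j a)
    (hb : IsLongest A q i k b) (hjk : A j k) : a + q j ≤ b := by
  obtain ⟨l, hl, rfl⟩ := ha.1
  have hlast := hl.2.2.2
  simpa [pathLen_concat q hlast] using hb.2 ⟨l ++ [k], hl.concat hjk, rfl⟩

lemma IsLongest.add_le_of_arc_start {i j k : V} {a b : ℝ} (ha : IsLongest A q j k a)
    (hb : IsLongest A q i k b) (hij : A i j) : q i + a ≤ b := by
  obtain ⟨l, hl, rfl⟩ := ha.1
  simpa [pathLen_cons q i hl.1] using hb.2 ⟨i :: l, hl.cons hij, rfl⟩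

lemma IsLongest.antitone_of_transGen (hq : ∀ v, 0 ≤ q v) {t : V} {L : V → ℝ}
    (hL : ∀ j, IsLongest A q j t (L j)) {i j : V} (hij : Relation.TransGen A i j) :
    L j ≤ L i := by
  induction hij with
  | single hij => linarith [(hL _).add_le_of_arc_start (hL i) hij, hq i]
  | @tail b c _ hbc ih => linarith [(hL c).add_le_of_arc_start (hL b) hbc, hq b]

lemma Sched.add_le_of_isLongest {s i j : V} {x : V → ℝ} {L : ℝ} (hx : Sched A s q x)
    (h : IsLongest A q i j L) : x i + L ≤ x j := by
  obtain ⟨l, hl, rfl⟩ := h.1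
  exact hl.add_pathLen_le hx.2.2

lemma sched_of_isLongest (hq : ∀ v, 0 ≤ q v) (hacyc : ∀ v, ¬ Relation.TransGen A v v) {s : V}
    {L : V → ℝ} (hL : ∀ j, IsLongest A q s j (L j)) : Sched A s q L :=
  ⟨(hL s).eq_zero hacyc, fun j => (hL j).nonneg hq,
    fun i j hij => by linarith [(hL i).add_le_of_arc_end (hL j) hij]⟩

lemma Sched.mono {s : V} {x q' : V → ℝ} (hx : Sched A s q x) (hq' : ∀ v, q' v ≤ q v) :
    Sched A s q' x :=
  ⟨hx.1, hx.2.1, fun i j hij => (hq' i).trans (hx.2.2 i j hij)⟩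

lemma min_arc_feasible {f g : V → ℝ} (hf : ∀ i j, A i j → q i ≤ f j - f i)
    (hg : ∀ i j, A i j → q i ≤ g j - g i) (i j : V) (hij : A i j) :
    q i ≤ min (f j) (g j) - min (f i) (g i) := by
  have := hf i j hij
  have := hg i j hij
  have := min_le_left (f i) (g i)
  have := min_le_right (f i) (g i)
  rw [le_sub_iff_add_le, le_min_iff]
  constructor <;> linarith

end Longest

lemma convexHull_indicator_subsets {V : Type*} [Finite V] (T : Set V) :
    convexHull ℝ {g : V → ℝ | ∃ H ⊆ T, g = H.indicator 1} =
      {h | (∀ j ∈ T, 0 ≤ h j ∧ h j ≤ 1) ∧ ∀ j ∉ T, h j = 0} := by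
  classical
  have hpi : {g : V → ℝ | ∃ H ⊆ T, g = H.indicator 1} =
      Set.univ.pi fun j => if j ∈ T then {0, 1} else {0} := by
    ext g
    simp only [Set.mem_ofPred_eq, Set.mem_univ_pi]
    constructor
    · rintro ⟨H, hHT, rfl⟩ j
      by_cases hj : j ∈ H
      · simp [hj, hHT hj]
      · by_cases hjT : j ∈ T <;> simp [hj, hjT]
    · intro hg
      refine ⟨{j | g j = 1}, fun j hj => ?_, funext fun j => ?_⟩
      · by_contra hjT
        simpa [hjT, show g j = 1 from hj] using hg j
      · have := hg j
        split_ifs at this <;> by_cases h1 : g j = 1 <;> simp_all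
  rw [hpi, convexHull_pi]
  ext h
  simp only [apply_ite (convexHull ℝ), convexHull_pair, segment_eq_Icc zero_le_one,
    convexHull_singleton, Set.mem_univ_pi, Set.mem_ofPred_eq]
  constructor
  · intro hh
    exact ⟨fun j hj => by simpa [hj] using hh j, fun j hj => by simpa [hj] using hh j⟩
  · rintro ⟨h01, h0⟩ j
    by_cases hj : j ∈ T
    · simpa [hj] using h01 j hj
    · simpa [hj] using h0 j hj


section Anchoring

variable {V : Type*} {A : V → V → Prop} {s t : V} {p dhat : V → ℝ}

def Anchored (A : V → V → Prop) (s t : V) (p : V → ℝ) (Δ : Set (V → ℝ)) (M : ℝ) (H : Set V) :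
    Prop :=
  ∃ x, Sched A s p x ∧ x t ≤ M ∧ XAnchored A s p Δ x H

lemma Anchored.le_of_mem (hdhat : ∀ v, 0 ≤ dhat v) {L0t xlo : V → ℝ}
    (hL0t : ∀ j, IsLongest A p j t (L0t j))
    (hxlo : ∀ j, IsLongest A (fun v => p v + dhat v) s j (xlo j)) {M : ℝ} {H : Set V}
    (hH : Anchored A s t p {δ | ∀ v, 0 ≤ δ v ∧ δ v ≤ dhat v} M H) {j : V} (hj : j ∈ H) :
    xlo j ≤ M - L0t j := by
  obtain ⟨x, hx, hxt, hanch⟩ := hH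
  obtain ⟨y, hy, hyx⟩ := hanch dhat fun v => ⟨hdhat v, le_rfl⟩
  have hlo : y s + xlo j ≤ y j := hy.add_le_of_isLongest (hxlo j)
  have hhi : x j + L0t j ≤ x t := hx.add_le_of_isLongest (hL0t j)
  rw [hy.1, hyx j hj] at hlo
  linarith

lemma anchored_of_forall_le (hp : ∀ v, 0 ≤ p v) (hdhat : ∀ v, 0 ≤ dhat v)
    (hacyc : ∀ v, ¬ Relation.TransGen A v v) (hsrc : ∀ v, v ≠ s → Relation.TransGen A s v)
    {L0t xlo : V → ℝ} (hL0t : ∀ j, IsLongest A p j t (L0t j))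
    (hxlo : ∀ j, IsLongest A (fun v => p v + dhat v) s j (xlo j)) {M : ℝ} (hM : L0t s ≤ M)
    {H : Set V} (hH : ∀ j ∈ H, xlo j ≤ M - L0t j) :
    Anchored A s t p {δ | ∀ v, 0 ≤ δ v ∧ δ v ≤ dhat v} M H := by
  have hlo : Sched A s (fun v => p v + dhat v) xlo :=
    sched_of_isLongest (fun v => add_nonneg (hp v) (hdhat v)) hacyc hxlo
  have hL0t_le (j : V) : L0t j ≤ M := by
    rcases eq_or_ne j s with rfl | hj
    · exact hM
    · exact (IsLongest.antitone_of_transGen hp hL0t (hsrc j hj)).trans hM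
  refine ⟨fun j => min (xlo j) (M - L0t j), ⟨?_, fun j => ?_, ?_⟩, ?_,
    fun δ hδ => ⟨xlo, hlo.mono fun v => by linarith [(hδ v).2], fun j hj => ?_⟩⟩
  · simp [hlo.1, hM]
  · exact le_min (hlo.2.1 j) (by linarith [hL0t_le j])
  · refine min_arc_feasible (hlo.mono fun v => le_add_of_nonneg_right (hdhat v)).2.2
      fun i j hij => ?_
    linarith [(hL0t j).add_le_of_arc_start (hL0t i) hij]
  · linarith [min_le_right (xlo t) (M - L0t t), (hL0t t).eq_zero hacyc]
  · exact (min_eq_left (hH j hj)).symm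

end Anchoring

theorem box_uncertainty_polytope_general
    {V : Type*} [Fintype V] (A : V → V → Prop) (s t : V)
    (p dhat : V → ℝ) (hp : ∀ v, 0 ≤ p v) (hdhat : ∀ v, 0 ≤ dhat v)
    (hacyc : ∀ v, ¬ Relation.TransGen A v v)
    (hsrc : ∀ v, v ≠ s → Relation.TransGen A s v)
    (L0t : V → ℝ) (hL0t : ∀ j, IsLongest A p j t (L0t j))
    (xlo : V → ℝ) (hxlo : ∀ j, IsLongest A (fun v => p v + dhat v) s j (xlo j))
    (M : ℝ) (hM : L0t s ≤ M)
    (Hstar : Set V) (hHstar : Hstar = {j | j ≠ s ∧ j ≠ t ∧ xlo j ≤ M - L0t j}) :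
    (∀ H : Set V, s ∉ H → t ∉ H →
      ((∃ x, Sched A s p x ∧ x t ≤ M ∧
          XAnchored A s p {δ | ∀ v, 0 ≤ δ v ∧ δ v ≤ dhat v} x H) ↔ H ⊆ Hstar)) ∧
    convexHull ℝ {h : V → ℝ | ∃ H : Set V, s ∉ H ∧ t ∉ H ∧
        (∃ x, Sched A s p x ∧ x t ≤ M ∧
          XAnchored A s p {δ | ∀ v, 0 ≤ δ v ∧ δ v ≤ dhat v} x H) ∧
        h = H.indicator 1} =
      {h : V → ℝ | (∀ j ∈ Hstar, 0 ≤ h j ∧ h j ≤ 1) ∧ ∀ j ∉ Hstar, h j = 0} := by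
  subst hHstar
  have hiff (H : Set V) (hs : s ∉ H) (ht : t ∉ H) :
      Anchored A s t p {δ | ∀ v, 0 ≤ δ v ∧ δ v ≤ dhat v} M H ↔
        H ⊆ {j | j ≠ s ∧ j ≠ t ∧ xlo j ≤ M - L0t j} :=
    ⟨fun hH j hj => ⟨ne_of_mem_of_not_mem hj hs, ne_of_mem_of_not_mem hj ht,
      hH.le_of_mem hdhat hL0t hxlo hj⟩,
      fun hsub => anchored_of_forall_le hp hdhat hacyc hsrc hL0t hxlo hM fun j hj => (hsub hj).2.2⟩
  refine ⟨hiff, ?_⟩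
  rw [← convexHull_indicator_subsets]
  congr 1
  ext g
  constructor
  · rintro ⟨H, hs, ht, hH, rfl⟩
    exact ⟨H, (hiff H hs ht).1 hH, rfl⟩
  · rintro ⟨H, hsub, rfl⟩
    have hs : s ∉ H := fun h => (hsub h).1 rfl
    have ht : t ∉ H := fun h => (hsub h).2.1 rfl
    exact ⟨H, hs, ht, (hiff H hs ht).2 hsub, rfl⟩

/-- box uncertainty polytope: with `x̲_j = L_{G(p+d̂)}(s,j)`,
`x̄_j = M − L⁰(j,t)` and `H* = {j ∈ J : x̲_j ≤ x̄_j}`, a set `H ⊆ J` is anchored iff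
`H ⊆ H*`, and the convex hull of incidence vectors of anchored sets equals the box
`[0,1]^{H*} × {0}^{J∖H*}`. -/
theorem box_uncertainty_polytope
    {V : Type*} [Fintype V] (A : V → V → Prop) (s t : V)
    (p dhat : V → ℝ) (hp : ∀ v, 0 ≤ p v) (hdhat : ∀ v, 0 ≤ dhat v)
    (hps : p s = 0) (hds : dhat s = 0) (hdt : dhat t = 0)
    (hacyc : ∀ v, ¬ Relation.TransGen A v v)
    (hsrc : ∀ v, v ≠ s → Relation.TransGen A s v)
    (hsink : ∀ v, v ≠ t → Relation.TransGen A v t)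
    (L0t : V → ℝ) (hL0t : ∀ j, IsLongest A p j t (L0t j))
    (xlo : V → ℝ) (hxlo : ∀ j, IsLongest A (fun v => p v + dhat v) s j (xlo j))
    (M : ℝ) (hM : L0t s ≤ M)
    (Hstar : Set V) (hHstar : Hstar = {j | j ≠ s ∧ j ≠ t ∧ xlo j ≤ M - L0t j}) :
    (∀ H : Set V, s ∉ H → t ∉ H →
      ((∃ x, Sched A s p x ∧ x t ≤ M ∧
          XAnchored A s p {δ | ∀ v, 0 ≤ δ v ∧ δ v ≤ dhat v} x H) ↔ H ⊆ Hstar)) ∧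
    convexHull ℝ {h : V → ℝ | ∃ H : Set V, s ∉ H ∧ t ∉ H ∧
        (∃ x, Sched A s p x ∧ x t ≤ M ∧
          XAnchored A s p {δ | ∀ v, 0 ≤ δ v ∧ δ v ≤ dhat v} x H) ∧
        h = H.indicator 1} =
      {h : V → ℝ | (∀ j ∈ Hstar, 0 ≤ h j ∧ h j ≤ 1) ∧ ∀ j ∉ Hstar, h j = 0} :=
  box_uncertainty_polytope_general A s t p dhat hp hdhat hacyc hsrc L0t hL0t xlo hxlo M hM Hstar
    hHstar
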